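/- arXiv:1112.0074 — 3 statements merged into one kernel-verified Lean document; each statement's English description precedes it below -/
import Mathlib

section
/- Let A be a commutative ring and 0 → N → M → Q → 0 a short exact sequence of A-modules with Q finitely presented. Then the sequence splits if and only if for every prime ideal p of A the localized sequence 0 → N_p → M_p → Q_p → 0 splits. -/
/-- A short exact sequence `0 → N → M → Q → 0` of modules over a commutative ring `A`
with `Q` finitely presented splits if and only if it splits after localization at every
prime ideal of `A`. -/
theorem stmt1 (A N M Q : Type*) [CommRing A]
    [AddCommGroup N] [AddCommGroup M] [AddCommGroup Q]
    [Module A N] [Module A M] [Module A Q]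
    (f : N →ₗ[A] M) (g : M →ₗ[A] Q)
    (hf : Function.Injective f) (hg : Function.Surjective g)
    (hfg : Function.Exact f g)
    [Module.FinitePresentation A Q] :
    (∃ s : Q →ₗ[A] M, g ∘ₗ s = LinearMap.id) ↔
      ∀ (p : Ideal A) [p.IsPrime],
        ∃ s : LocalizedModule p.primeCompl Q →ₗ[Localization p.primeCompl]
            LocalizedModule p.primeCompl M,
          (LocalizedModule.map p.primeCompl g) ∘ₗ s = LinearMap.id := by
  constructor
  · rintro ⟨s, hs⟩ p hp
    refine ⟨LocalizedModule.map p.primeCompl s, ?_⟩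
    ext x
    induction x using LocalizedModule.induction_on with
    | h q t =>
      have := LinearMap.congr_fun hs q
      simp only [LinearMap.comp_apply, LinearMap.id_apply] at this ⊢
      rw [LocalizedModule.map_mk, LocalizedModule.map_mk, this]
  · intro H
    exact LinearMap.split_surjective_of_localization_maximal g fun I hI ↦ H I
end

section
/- Let R be a commutative ring, Λ a finite free Z_p-module (more generally a finite free module over a base ring B with R a B-algebra), ψ a perfect B-bilinear pairing exhibiting a dual lattice Λ̂, and K ⊆ Λ ⊗_B R a submodule such that the quotient T = (Λ ⊗_B R)/K is finitely generated projective over R. Define K^⊥ = { λ ∈ Λ̂ ⊗_B R : ψ_R(K, λ) = 0 }. Then there is a short exact sequence 0 → Hom_R(K, R) → Λ̂ ⊗_B R → K^⊥ → 0 of R-modules in which the surjection splits the inclusion K^⊥ ⊆ Λ̂ ⊗_B R; in particular K^⊥ is R-projective and its projective rank function is complementary to that of K. -/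
/-!
Since `T` is projective, `K` has a complement `Q` in `M = R ⊗ Λ`, so restricting forms
`Dual M → Dual K` has a section: extend by zero on `Q`. The base-changed pairing identifies
`R ⊗ Λ̂` with `Dual M`, and under this identification `K^⊥` is the kernel of the restriction
map. The kernel of a split surjection is complementary to the image of the section, which gives
the split exact sequence. Ranks at stalks add over direct sums of finite projective modules, and
`Dual K` has the same rank as `K` because the localizations of `K` are free.
-/

open TensorProduct

namespace Submodule

theorem iInf_ker_eq_ker_dualRestrict_comp_flip {R M N : Type*} [CommSemiring R] [AddCommMonoid M]
    [Module R M] [AddCommMonoid N] [Module R N]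
    (pr : M →ₗ[R] N →ₗ[R] R) (K : Submodule R M) :
    ⨅ x : K, LinearMap.ker (pr x) = LinearMap.ker (K.dualRestrict ∘ₗ pr.flip) := by
  ext y
  simp [Submodule.mem_iInf, LinearMap.ext_iff]

variable {R M : Type*} [Ring R] [AddCommGroup M] [Module R M]

theorem isComplemented_of_projective_quotient (K : Submodule R M)
    [Module.Projective R (M ⧸ K)] : IsComplemented K := by
  obtain ⟨l, hl⟩ := Module.projective_lifting_property K.mkQ LinearMap.id K.mkQ_surjective
  have hsplit := (LinearMap.exact_subtype_mkQ K).split_tfae'.out 0 1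
  obtain ⟨π, hπ⟩ := (hsplit.mp ⟨K.injective_subtype, l, hl⟩).2
  exact ⟨LinearMap.ker π, LinearMap.isCompl_of_proj (LinearMap.congr_fun hπ)⟩

theorem projective_of_isCompl [Module.Projective R M] {p q : Submodule R M} (h : IsCompl p q) :
    Module.Projective R p :=
  .of_split p.subtype (p.projectionOnto q h) (projectionOnto_comp_subtype h)

theorem finite_of_isCompl [Module.Finite R M] {p q : Submodule R M} (h : IsCompl p q) :
    Module.Finite R p :=
  .of_surjective _ (p.projectionOnto_surjective h)

end Submodule

namespace LinearMap

theorem isCompl_ker_range_of_comp_eq_id {R N D : Type*} [Ring R] [AddCommGroup N] [Module R N]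
    [AddCommGroup D] [Module R D] {φ : N →ₗ[R] D} {ι : D →ₗ[R] N}
    (h : φ ∘ₗ ι = LinearMap.id) : IsCompl (ker φ) (range ι) := by
  have hφι (d : D) : φ (ι d) = d := LinearMap.congr_fun h d
  constructor
  · rw [Submodule.disjoint_def]
    rintro _ hx ⟨d, rfl⟩
    rw [mem_ker, hφι] at hx
    rw [hx, map_zero]
  · rw [codisjoint_iff, eq_top_iff]
    intro x _
    rw [← sub_add_cancel x (ι (φ x))]
    exact Submodule.add_mem_sup (by simp [hφι]) (mem_range_self ι _)

theorem bijective_flip_of_baseChange {B R Λ Λh : Type*} [CommSemiring B] [CommSemiring R]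
    [Algebra B R] [AddCommMonoid Λ] [Module B Λ] [Module.Finite B Λ] [Module.Free B Λ]
    [AddCommMonoid Λh] [Module B Λh] {ψ : Λ →ₗ[B] Λh →ₗ[B] B} (hψ : Function.Bijective ψ.flip)
    {pr : (R ⊗[B] Λ) →ₗ[R] (R ⊗[B] Λh) →ₗ[R] R}
    (hpr : ∀ x y, pr (1 ⊗ₜ x) (1 ⊗ₜ y) = algebraMap B R (ψ x y)) :
    Function.Bijective pr.flip := by
  let e := (LinearEquiv.ofBijective ψ.flip hψ).baseChange B R _ _ ≪≫ₗ
    (TensorProduct.isBaseChange B Λ R).toDualBaseChange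
  suffices pr.flip = e from this ▸ e.bijective
  refine TensorProduct.AlgebraTensorModule.ext fun r y => ?_
  refine TensorProduct.AlgebraTensorModule.ext fun r' x => ?_
  have hdual := (TensorProduct.isBaseChange B Λ R).toDualBaseChange_tmul 1 (ψ.flip y) x
  rw [TensorProduct.mk_apply, one_mul, LinearMap.flip_apply] at hdual
  rw [LinearMap.flip_apply, show r' ⊗ₜ[B] x = r' • (1 : R) ⊗ₜ[B] x by simp [smul_tmul'],
    show r ⊗ₜ[B] y = r • (1 : R) ⊗ₜ[B] y by simp [smul_tmul']]
  simp [e, hpr, hdual]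
  ring

end LinearMap

namespace Module

variable {R : Type*} [CommRing R]

theorem rankAtStalk_add_of_isCompl {N : Type*} [AddCommGroup N] [Module R N]
    [Module.Finite R N] [Module.Projective R N] {p q : Submodule R N} (h : IsCompl p q) :
    rankAtStalk p + rankAtStalk q = rankAtStalk (R := R) N := by
  have := Submodule.projective_of_isCompl h
  have := Submodule.projective_of_isCompl h.symm
  have := Submodule.finite_of_isCompl h
  have := Submodule.finite_of_isCompl h.symm
  rw [← rankAtStalk_prod, rankAtStalk_eq_of_equiv (Submodule.prodEquivOfIsCompl p q h)]

theorem rankAtStalk_ker_add_of_comp_eq_id {N D : Type*} [AddCommGroup N] [Module R N]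
    [AddCommGroup D] [Module R D] [Module.Finite R N] [Module.Projective R N]
    {φ : N →ₗ[R] D} {ι : D →ₗ[R] N} (h : φ ∘ₗ ι = LinearMap.id) :
    rankAtStalk (LinearMap.ker φ) + rankAtStalk D = rankAtStalk (R := R) N := by
  have hι := LinearMap.injective_of_comp_eq_id ι φ h
  rw [← rankAtStalk_add_of_isCompl (LinearMap.isCompl_ker_range_of_comp_eq_id h),
    rankAtStalk_eq_of_equiv (LinearEquiv.ofInjective ι hι)]

theorem rankAtStalk_dual (K : Type*) [AddCommGroup K] [Module R K]
    [Module.Finite R K] [Module.Projective R K] :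
    rankAtStalk (Dual R K) = rankAtStalk (R := R) K := by
  ext p
  set S := p.asIdeal.primeCompl
  set A := Localization.AtPrime p.asIdeal
  have : Module.FinitePresentation R K := Module.finitePresentation_of_projective R K
  let j : Dual R K →ₗ[R] (LocalizedModule S K →ₗ[R] A) :=
    IsLocalizedModule.map S (LocalizedModule.mkLinearMap S K) (Algebra.linearMap R A)
  have : IsLocalizedModule S j := Module.FinitePresentation.isLocalizedModule_map S _ _
  let e : LocalizedModule S (Dual R K) ≃ₗ[A] Dual A (LocalizedModule S K) :=
    (IsLocalizedModule.iso S j).extendScalarsOfIsLocalization S A ≪≫ₗ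
      LinearMap.extendScalarsOfIsLocalizationEquiv S A
  have : Module.Free A (LocalizedModule S K) := Module.free_of_flat_of_isLocalRing
  rw [rankAtStalk, rankAtStalk, e.finrank_eq]
  exact (Free.chooseBasis A (LocalizedModule S K)).toDualEquiv.finrank_eq.symm

end Module

theorem stmt8_general (B R Λ Λh : Type*) [CommRing B] [CommRing R] [Algebra B R]
    [AddCommGroup Λ] [Module B Λ] [Module.Finite B Λ] [Module.Free B Λ]
    [AddCommGroup Λh] [Module B Λh]
    (ψ : Λ →ₗ[B] Λh →ₗ[B] B)
    (hperf₂ : Function.Bijective ψ.flip)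
    (K : Submodule R (R ⊗[B] Λ))
    (hT : Module.Projective R ((R ⊗[B] Λ) ⧸ K))
    (pr : (R ⊗[B] Λ) →ₗ[R] (R ⊗[B] Λh) →ₗ[R] R)
    (hpr : ∀ (r r' : R) (x : Λ) (y : Λh),
      pr (r ⊗ₜ x) (r' ⊗ₜ y) = r * r' * algebraMap B R (ψ x y)) :
    let Kperp : Submodule R (R ⊗[B] Λh) := ⨅ x : K, LinearMap.ker (pr ↑x)
    ∃ (ι : (↥K →ₗ[R] R) →ₗ[R] (R ⊗[B] Λh))
      (s : (R ⊗[B] Λh) →ₗ[R] ↥Kperp),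
      Function.Injective ι ∧ Function.Surjective s ∧ Function.Exact ι s ∧
      (∀ y : ↥Kperp, s ↑y = y) ∧
      Module.Projective R ↥Kperp ∧
      (∀ (p : Ideal R) [p.IsPrime],
        Module.finrank (Localization p.primeCompl) (LocalizedModule p.primeCompl ↥K)
          + Module.finrank (Localization p.primeCompl)
              (LocalizedModule p.primeCompl ↥Kperp)
          = Module.finrank (Localization p.primeCompl)
              (LocalizedModule p.primeCompl (R ⊗[B] Λh))) := by
  intro Kperp
  have := hT
  obtain ⟨Q, hKQ⟩ := K.isComplemented_of_projective_quotient
  have hpr₁ (x : Λ) (y : Λh) : pr (1 ⊗ₜ x) (1 ⊗ₜ y) = algebraMap B R (ψ x y) := by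
    simpa using hpr 1 1 x y
  let e := LinearEquiv.ofBijective pr.flip (LinearMap.bijective_flip_of_baseChange hperf₂ hpr₁)
  let φ := K.dualRestrict ∘ₗ pr.flip
  let ι := e.symm.toLinearMap ∘ₗ (K.projectionOnto Q hKQ).dualMap
  have hφι : φ ∘ₗ ι = LinearMap.id := by
    refine LinearMap.ext fun f => LinearMap.ext fun k => ?_
    have he (g : Module.Dual R (R ⊗[B] Λ)) : pr.flip (e.symm g) = g := e.apply_symm_apply g
    simp [φ, ι, he, Submodule.projectionOnto_apply_left]
  have hc := LinearMap.isCompl_ker_range_of_comp_eq_id hφι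
  have : Module.Free R (R ⊗[B] Λh) := .of_equiv e.symm
  have : Module.Finite R (R ⊗[B] Λh) := .equiv e.symm
  have := Submodule.finite_of_isCompl hKQ
  have := Submodule.projective_of_isCompl hKQ
  rw [show Kperp = LinearMap.ker φ from K.iInf_ker_eq_ker_dualRestrict_comp_flip pr]
  refine ⟨ι, (LinearMap.ker φ).projectionOnto (LinearMap.range ι) hc,
    LinearMap.injective_of_comp_eq_id ι φ hφι, Submodule.projectionOnto_surjective hc,
    LinearMap.exact_iff.mpr (Submodule.ker_projectionOnto hc),
    Submodule.projectionOnto_apply_left hc, Submodule.projective_of_isCompl hc, fun p _ => ?_⟩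
  change Module.rankAtStalk K ⟨p, ‹_›⟩ + Module.rankAtStalk (LinearMap.ker φ) ⟨p, ‹_›⟩ =
    Module.rankAtStalk (R ⊗[B] Λh) ⟨p, ‹_›⟩
  rw [← Module.rankAtStalk_ker_add_of_comp_eq_id hφι, Module.rankAtStalk_dual K, Pi.add_apply,
    add_comm]

/-- Let `B` be a commutative base ring, `Λ`, `Λ̂` finite free `B`-modules with a perfect
`B`-bilinear pairing `ψ : Λ × Λ̂ → B`, `R` a commutative `B`-algebra, and
`K ⊆ Λ ⊗_B R` a submodule whose quotient is projective over `R`.  Let `pr` denote the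
base change of `ψ` to `R` and `K^⊥ = {λ ∈ Λ̂ ⊗_B R : ψ_R(K, λ) = 0}`.  Then there is a
short exact sequence `0 → Hom_R(K, R) → Λ̂ ⊗_B R → K^⊥ → 0` in which the surjection
splits the inclusion `K^⊥ ⊆ Λ̂ ⊗_B R`; in particular `K^⊥` is `R`-projective and its
projective rank function is complementary to that of `K`. -/
theorem stmt8 (B R Λ Λh : Type*) [CommRing B] [CommRing R] [Algebra B R]
    [AddCommGroup Λ] [Module B Λ] [Module.Finite B Λ] [Module.Free B Λ]
    [AddCommGroup Λh] [Module B Λh] [Module.Finite B Λh] [Module.Free B Λh]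
    (ψ : Λ →ₗ[B] Λh →ₗ[B] B)
    (hperf₁ : Function.Bijective ψ)
    (hperf₂ : Function.Bijective ψ.flip)
    (K : Submodule R (R ⊗[B] Λ))
    (hT : Module.Projective R ((R ⊗[B] Λ) ⧸ K))
    (pr : (R ⊗[B] Λ) →ₗ[R] (R ⊗[B] Λh) →ₗ[R] R)
    (hpr : ∀ (r r' : R) (x : Λ) (y : Λh),
      pr (r ⊗ₜ x) (r' ⊗ₜ y) = r * r' * algebraMap B R (ψ x y)) :
    let Kperp : Submodule R (R ⊗[B] Λh) := ⨅ x : K, LinearMap.ker (pr ↑x)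
    ∃ (ι : (↥K →ₗ[R] R) →ₗ[R] (R ⊗[B] Λh))
      (s : (R ⊗[B] Λh) →ₗ[R] ↥Kperp),
      Function.Injective ι ∧ Function.Surjective s ∧ Function.Exact ι s ∧
      (∀ y : ↥Kperp, s ↑y = y) ∧
      Module.Projective R ↥Kperp ∧
      (∀ (p : Ideal R) [p.IsPrime],
        Module.finrank (Localization p.primeCompl) (LocalizedModule p.primeCompl ↥K)
          + Module.finrank (Localization p.primeCompl)
              (LocalizedModule p.primeCompl ↥Kperp)
          = Module.finrank (Localization p.primeCompl)
              (LocalizedModule p.primeCompl (R ⊗[B] Λh))) :=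
  stmt8_general B R Λ Λh ψ hperf₂ K hT pr hpr
end

section
/- Let R be a commutative ring and consider a square of R-module inclusions L₁ ⊆ V₁, L₂ ⊆ V₂ with L₁ ⊆ L₂ and V₁ ⊆ V₂. Suppose (1) V₁/L₁ and V₂/L₂ are finitely generated projective R-modules, (2) their projective rank functions are constant on Spec R and equal, and (3) V₂/V₁ is a free R-module of rank r. Then L₂/L₁ is a projective R-module with constant projective rank function equal to r. -/
/-!
Inside `V₂`, the module `V₂/L₁` splits in two ways, because `V₂/L₂` and `V₂/V₁` are projective:
`L₂/L₁ × V₂/L₂ ≃ V₂/L₁ ≃ V₁/L₁ × V₂/V₁`. Hence `L₂/L₁` is a direct summand of a finite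
projective module, and comparing ranks at every prime gives `rank (L₂/L₁) + c = c + r`.
-/

open Module LinearMap

namespace Submodule

variable {R M : Type*} [Ring R] [AddCommGroup M] [Module R M]

/-- `V/L` does not change when `V` and `L` are first restricted to a submodule `U ⊇ V`. -/
noncomputable def quotientEquivComapSubtype (L V U : Submodule R M) (hVU : V ≤ U) :
    (V ⧸ L.comap V.subtype) ≃ₗ[R]
      (V.comap U.subtype ⧸ (L.comap U.subtype).comap (V.comap U.subtype).subtype) :=
  Quotient.equiv _ _ (comapSubtypeEquivOfLe hVU).symm <| by
    ext x
    refine ⟨?_, fun hx ↦ ⟨comapSubtypeEquivOfLe hVU x, hx, LinearEquiv.symm_apply_apply _ _⟩⟩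
    rintro ⟨y, hy, rfl⟩
    exact hy

theorem nonempty_quotient_equiv_prod_of_le {A B : Submodule R M} (hAB : A ≤ B)
    [Projective R (M ⧸ B)] :
    Nonempty ((M ⧸ A) ≃ₗ[R] (B ⧸ A.comap B.subtype) × (M ⧸ B)) := by
  have hker : ker (A.mkQ ∘ₗ B.subtype) = A.comap B.subtype := by
    rw [ker_comp, ker_mkQ]
  let f := (A.comap B.subtype).liftQ (A.mkQ ∘ₗ B.subtype) hker.ge
  let g := A.liftQ B.mkQ (by rwa [ker_mkQ])
  have hf : Function.Injective f := ker_eq_bot.mp (ker_liftQ_eq_bot _ _ _ hker.le)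
  have hg : Function.Surjective g := range_eq_top.mp (by rw [range_liftQ, range_mkQ])
  have hfg : Function.Exact f g := by
    rw [exact_iff, ker_liftQ, range_liftQ, ker_mkQ, range_comp, range_subtype]
  obtain ⟨l, hl⟩ := projective_lifting_property g LinearMap.id hg
  exact ⟨(hfg.splitSurjectiveEquiv hf ⟨l, hl⟩).1⟩

theorem nonempty_quotient_prod_equiv_quotient_prod {L₁ L₂ V₁ V₂ : Submodule R M}
    (h12 : L₁ ≤ L₂) (hL1 : L₁ ≤ V₁) (hL2 : L₂ ≤ V₂) (hV : V₁ ≤ V₂)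
    [Projective R (V₂ ⧸ L₂.comap V₂.subtype)] [Projective R (V₂ ⧸ V₁.comap V₂.subtype)] :
    Nonempty (((L₂ ⧸ L₁.comap L₂.subtype) × (V₂ ⧸ L₂.comap V₂.subtype)) ≃ₗ[R]
      ((V₁ ⧸ L₁.comap V₁.subtype) × (V₂ ⧸ V₁.comap V₂.subtype))) := by
  obtain ⟨eL⟩ := nonempty_quotient_equiv_prod_of_le (comap_mono h12 : L₁.comap V₂.subtype ≤ _)
  obtain ⟨eV⟩ := nonempty_quotient_equiv_prod_of_le (comap_mono hL1 : L₁.comap V₂.subtype ≤ _)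
  exact ⟨(quotientEquivComapSubtype L₁ L₂ V₂ hL2).prodCongr (.refl R _) ≪≫ₗ eL.symm ≪≫ₗ eV ≪≫ₗ
    (quotientEquivComapSubtype L₁ V₁ V₂ hV).symm.prodCongr (.refl R _)⟩

end Submodule

section

variable {R Q B A F : Type*} [Ring R] [AddCommGroup Q] [AddCommGroup B] [AddCommGroup A]
  [AddCommGroup F] [Module R Q] [Module R B] [Module R A] [Module R F]

theorem Module.Projective.of_prod_equiv_prod [Projective R A] [Projective R F]
    (e : (Q × B) ≃ₗ[R] (A × F)) : Projective R Q :=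
  .of_split (e.toLinearMap ∘ₗ inl R Q B) (fst R Q B ∘ₗ e.symm.toLinearMap) (by ext; simp)

theorem Module.Finite.of_prod_equiv_prod [Module.Finite R A] [Module.Finite R F]
    (e : (Q × B) ≃ₗ[R] (A × F)) : Module.Finite R Q :=
  .of_surjective (fst R Q B ∘ₗ e.symm.toLinearMap) (Prod.fst_surjective.comp e.symm.surjective)

end

section

variable {R Q B A F : Type*} [CommRing R] [AddCommGroup Q] [AddCommGroup B] [AddCommGroup A]
  [AddCommGroup F] [Module R Q] [Module R B] [Module R A] [Module R F]

theorem Module.rankAtStalk_add_eq_of_prod_equiv_prod [Flat R Q] [Flat R B] [Flat R A] [Flat R F]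
    [Module.Finite R Q] [Module.Finite R B] [Module.Finite R A] [Module.Finite R F]
    (e : (Q × B) ≃ₗ[R] (A × F)) (p : PrimeSpectrum R) :
    rankAtStalk Q p + rankAtStalk B p = rankAtStalk A p + rankAtStalk F p := by
  simp only [← Pi.add_apply, ← rankAtStalk_prod, rankAtStalk_eq_of_equiv e]

end

/-- Let `R` be a commutative ring and `L₁ ⊆ V₁`, `L₂ ⊆ V₂` submodules of an ambient
module with `L₁ ⊆ L₂` and `V₁ ⊆ V₂`.  If (1) `V₁/L₁` and `V₂/L₂` are finitely generated
projective `R`-modules, (2) their projective rank functions are constant on `Spec R` and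
equal, and (3) `V₂/V₁` is free of rank `r`, then `L₂/L₁` is projective with constant
projective rank function equal to `r`. -/
theorem stmt15 (R W : Type*) [CommRing R] [AddCommGroup W] [Module R W]
    (L₁ L₂ V₁ V₂ : Submodule R W)
    (h12 : L₁ ≤ L₂) (hL1 : L₁ ≤ V₁) (hL2 : L₂ ≤ V₂) (hV : V₁ ≤ V₂)
    (r c : ℕ)
    [Module.Finite R (↥V₁ ⧸ L₁.comap V₁.subtype)]
    (hp1 : Module.Projective R (↥V₁ ⧸ L₁.comap V₁.subtype))
    [Module.Finite R (↥V₂ ⧸ L₂.comap V₂.subtype)]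
    (hp2 : Module.Projective R (↥V₂ ⧸ L₂.comap V₂.subtype))
    (hrank1 : ∀ (p : Ideal R) [p.IsPrime],
      Module.finrank (Localization p.primeCompl)
        (LocalizedModule p.primeCompl (↥V₁ ⧸ L₁.comap V₁.subtype)) = c)
    (hrank2 : ∀ (p : Ideal R) [p.IsPrime],
      Module.finrank (Localization p.primeCompl)
        (LocalizedModule p.primeCompl (↥V₂ ⧸ L₂.comap V₂.subtype)) = c)
    (bfree : Module.Basis (Fin r) R (↥V₂ ⧸ V₁.comap V₂.subtype)) :
    Module.Projective R (↥L₂ ⧸ L₁.comap L₂.subtype) ∧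
    ∀ (p : Ideal R) [p.IsPrime],
      Module.finrank (Localization p.primeCompl)
        (LocalizedModule p.primeCompl (↥L₂ ⧸ L₁.comap L₂.subtype)) = r := by
  have := hp1
  have := hp2
  have : Projective R (V₂ ⧸ V₁.comap V₂.subtype) := .of_basis bfree
  have : Module.Finite R (V₂ ⧸ V₁.comap V₂.subtype) := .of_basis bfree
  obtain ⟨e⟩ := Submodule.nonempty_quotient_prod_equiv_quotient_prod h12 hL1 hL2 hV
  have : Module.Finite R (L₂ ⧸ L₁.comap L₂.subtype) := .of_prod_equiv_prod e
  have hproj : Projective R (L₂ ⧸ L₁.comap L₂.subtype) := .of_prod_equiv_prod e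
  refine ⟨hproj, fun p hp ↦ ?_⟩
  let x : PrimeSpectrum R := ⟨p, hp⟩
  have : Nontrivial R := x.nontrivial
  have : Free R (V₂ ⧸ V₁.comap V₂.subtype) := .of_basis bfree
  have hQ := rankAtStalk_add_eq_of_prod_equiv_prod e x
  have hF : rankAtStalk (V₂ ⧸ V₁.comap V₂.subtype) x = r := by
    rw [rankAtStalk_eq_finrank_of_free, Pi.natCast_apply, finrank_eq_card_basis bfree,
      Fintype.card_fin, Nat.cast_id]
  have hA : rankAtStalk (V₁ ⧸ L₁.comap V₁.subtype) x = c := hrank1 p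
  have hB : rankAtStalk (V₂ ⧸ L₂.comap V₂.subtype) x = c := hrank2 p
  change rankAtStalk (L₂ ⧸ L₁.comap L₂.subtype) x = r
  omega
end
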